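/- arXiv:0810.4632 — 6 statements merged into one kernel-verified Lean document; each statement's English description precedes it below -/
import Mathlib

section
/- Let φ : X → Y be a code between shift spaces. If φ is open and has a uniform lifting length, then φ is bi-continuing and has a bi-retract. -/
open Set Filter

/-- The product topology on `ℤ → A`, where the alphabet `A` carries the
discrete topology. -/
def seqTop (A : Type*) : TopologicalSpace (ℤ → A) :=
  @Pi.topologicalSpace ℤ (fun _ => A) (fun _ => ⊥)

/-- The shift map `σ`, defined by `σ(x)_i = x_{i+1}`. -/
def shiftMap {A : Type*} (x : ℤ → A) : ℤ → A := fun i => x (i + 1)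

/-- A shift space: a nonempty, closed, shift-invariant subset of `A^ℤ`. -/
def IsShiftSpace {A : Type*} (X : Set (ℤ → A)) : Prop :=
  X.Nonempty ∧ @IsClosed _ (seqTop A) X ∧ shiftMap '' X = X

/-- The word `u` occurs in `x` at coordinate `i`. -/
def OccursAt {A : Type*} (x : ℤ → A) (u : List A) (i : ℤ) : Prop :=
  ∀ k : Fin u.length, x (i + ((k : ℕ) : ℤ)) = u.get k

/-- `u` is a word of the language `B(X)` of `X`. -/
def IsWordOf {A : Type*} (X : Set (ℤ → A)) (u : List A) : Prop :=
  ∃ x ∈ X, OccursAt x u 0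

/-- A shift of finite type: a shift space defined by finitely many
forbidden words. -/
def IsSFT {A : Type*} (X : Set (ℤ → A)) : Prop :=
  IsShiftSpace X ∧ ∃ F : Finset (List A),
    X = { x | ∀ u ∈ F, ∀ i : ℤ, ¬ OccursAt x u i }

/-- A code: a continuous shift-commuting map from `X` to `Y`. -/
def IsCode {A B : Type*} (X : Set (ℤ → A)) (Y : Set (ℤ → B))
    (φ : (ℤ → A) → (ℤ → B)) : Prop :=
  Set.MapsTo φ X Y ∧ @ContinuousOn _ _ (seqTop A) (seqTop B) φ X ∧
    ∀ x ∈ X, φ (shiftMap x) = shiftMap (φ x)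

/-- A factor code: a surjective code. -/
def IsFactorCode {A B : Type*} (X : Set (ℤ → A)) (Y : Set (ℤ → B))
    (φ : (ℤ → A) → (ℤ → B)) : Prop :=
  IsCode X Y φ ∧ Y ⊆ φ '' X

/-- A code is open if it maps (relatively) open subsets of `X` to
(relatively) open subsets of `Y`. -/
def IsOpenCode {A B : Type*} (X : Set (ℤ → A)) (Y : Set (ℤ → B))
    (φ : (ℤ → A) → (ℤ → B)) : Prop :=
  ∀ U : Set (ℤ → A), @IsOpen _ (seqTop A) U →
    ∃ V : Set (ℤ → B), @IsOpen _ (seqTop B) V ∧ φ '' (X ∩ U) = Y ∩ V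

/-- A code has a uniform lifting length `l`. -/
def HasUniformLiftingLength {A B : Type*} (X : Set (ℤ → A)) (Y : Set (ℤ → B))
    (φ : (ℤ → A) → (ℤ → B)) : Prop :=
  ∃ l : ℕ, ∀ k : ℕ, ∀ x ∈ X, ∀ y ∈ Y,
    (∀ i : ℤ, |i| ≤ (k : ℤ) + (l : ℤ) → φ x i = y i) →
    ∃ x' ∈ X, (∀ i : ℤ, |i| ≤ (k : ℤ) → x' i = x i) ∧ φ x' = y

/-- Right continuing code. -/
def IsRightContinuing {A B : Type*} (X : Set (ℤ → A)) (Y : Set (ℤ → B))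
    (φ : (ℤ → A) → (ℤ → B)) : Prop :=
  ∀ x ∈ X, ∀ y ∈ Y, (∃ M : ℤ, ∀ i ≤ M, φ x i = y i) →
    ∃ x' ∈ X, (∃ M : ℤ, ∀ i ≤ M, x' i = x i) ∧ φ x' = y

/-- Left continuing code. -/
def IsLeftContinuing {A B : Type*} (X : Set (ℤ → A)) (Y : Set (ℤ → B))
    (φ : (ℤ → A) → (ℤ → B)) : Prop :=
  ∀ x ∈ X, ∀ y ∈ Y, (∃ M : ℤ, ∀ i, M ≤ i → φ x i = y i) →
    ∃ x' ∈ X, (∃ M : ℤ, ∀ i, M ≤ i → x' i = x i) ∧ φ x' = y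

/-- `n` is a right continuing retract of `φ`. -/
def IsRightRetract {A B : Type*} (X : Set (ℤ → A)) (Y : Set (ℤ → B))
    (φ : (ℤ → A) → (ℤ → B)) (n : ℕ) : Prop :=
  ∀ x ∈ X, ∀ y ∈ Y, (∀ i : ℤ, i ≤ 0 → φ x i = y i) →
    ∃ x' ∈ X, φ x' = y ∧ ∀ i : ℤ, i ≤ -(n : ℤ) → x' i = x i

/-- `n` is a left continuing retract of `φ`. -/
def IsLeftRetract {A B : Type*} (X : Set (ℤ → A)) (Y : Set (ℤ → B))
    (φ : (ℤ → A) → (ℤ → B)) (n : ℕ) : Prop :=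
  ∀ x ∈ X, ∀ y ∈ Y, (∀ i : ℤ, 0 ≤ i → φ x i = y i) →
    ∃ x' ∈ X, φ x' = y ∧ ∀ i : ℤ, (n : ℤ) ≤ i → x' i = x i

/-- Right closing code. -/
def IsRightClosing {A B : Type*} (X : Set (ℤ → A))
    (φ : (ℤ → A) → (ℤ → B)) : Prop :=
  ∀ x ∈ X, ∀ x' ∈ X, (∃ M : ℤ, ∀ i ≤ M, x i = x' i) → φ x = φ x' → x = x'

/-- Left closing code. -/
def IsLeftClosing {A B : Type*} (X : Set (ℤ → A))
    (φ : (ℤ → A) → (ℤ → B)) : Prop :=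
  ∀ x ∈ X, ∀ x' ∈ X, (∃ M : ℤ, ∀ i, M ≤ i → x i = x' i) → φ x = φ x' → x = x'

/-- A sofic shift: a factor of a shift of finite type. -/
def IsSofic {B : Type*} (Y : Set (ℤ → B)) : Prop :=
  ∃ (C : Type) (_ : Fintype C) (Z : Set (ℤ → C)) (π : (ℤ → C) → (ℤ → B)),
    IsSFT Z ∧ IsFactorCode Z Y π

/-- Irreducibility of a shift space. -/
def IsIrreducibleShift {A : Type*} (X : Set (ℤ → A)) : Prop :=
  ∀ u v : List A, IsWordOf X u → IsWordOf X v →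
    ∃ w : List A, IsWordOf X (u ++ w ++ v)

/-- Mixing shift space. -/
def IsMixingShift {A : Type*} (X : Set (ℤ → A)) : Prop :=
  ∀ u v : List A, IsWordOf X u → IsWordOf X v →
    ∃ N : ℕ, ∀ n : ℕ, N ≤ n →
      ∃ w : List A, w.length = n ∧ IsWordOf X (u ++ w ++ v)

/-- The almost specification property. -/
def AlmostSpecified {A : Type*} (X : Set (ℤ → A)) : Prop :=
  ∃ N : ℕ, ∀ u v : List A, IsWordOf X u → IsWordOf X v →
    ∃ w : List A, w.length ≤ N ∧ IsWordOf X (u ++ w ++ v)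

/-- The specification property. -/
def HasSpecification {A : Type*} (X : Set (ℤ → A)) : Prop :=
  ∃ N : ℕ, ∀ u v : List A, IsWordOf X u → IsWordOf X v →
    ∃ w : List A, w.length = N ∧ IsWordOf X (u ++ w ++ v)

/-- A synchronizing word of `X`. -/
def IsSynchronizingWord {A : Type*} (X : Set (ℤ → A)) (v : List A) : Prop :=
  IsWordOf X v ∧ ∀ u w : List A, IsWordOf X (u ++ v) → IsWordOf X (v ++ w) →
    IsWordOf X (u ++ v ++ w)

/-- A synchronized system: an irreducible shift space with a synchronizing
word. -/
def IsSynchronizedSystem {A : Type*} (X : Set (ℤ → A)) : Prop :=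
  IsIrreducibleShift X ∧ ∃ v : List A, IsSynchronizingWord X v

/-- A subshift of `X`. -/
def IsSubshiftOf {A : Type*} (X' X : Set (ℤ → A)) : Prop :=
  IsShiftSpace X' ∧ X' ⊆ X

/-- The number of words of length `n` in the language of `X`. -/
noncomputable def wordCount {A : Type*} (X : Set (ℤ → A)) (n : ℕ) : ℕ :=
  Set.ncard { u : List A | u.length = n ∧ IsWordOf X u }

/-- The entropy `h(X) = lim (1/n) log |B_n(X)|` of a shift space (the limit
exists by subadditivity, hence equals the limsup used here). -/
noncomputable def entropy {A : Type*} (X : Set (ℤ → A)) : ℝ :=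
  Filter.limsup (fun n : ℕ => Real.log (wordCount X n) / (n : ℝ)) Filter.atTop

/-- The periodic condition `P(X) ↘ P(Y)`. -/
def PeriodicCondition {A B : Type*} (X : Set (ℤ → A)) (Y : Set (ℤ → B)) : Prop :=
  ∀ n : ℕ, 0 < n → (∃ x ∈ X, shiftMap^[n] x = x) → ∃ y ∈ Y, shiftMap^[n] y = y

/-- A cyclic cover `D_0, …, D_{p-1}` of a shift space `X`. -/
def IsCyclicCover {A : Type*} (X : Set (ℤ → A)) (p : ℕ)
    (D : ZMod p → Set (ℤ → A)) : Prop :=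
  0 < p ∧
  (∀ i, @IsClosed _ (seqTop A) (D i) ∧ D i ⊆ X) ∧
  (⋃ i, D i) = X ∧
  (∀ i, shiftMap '' D i = D (i + 1)) ∧
  (∀ i, ∀ U V : Set (ℤ → A), @IsOpen _ (seqTop A) U → @IsOpen _ (seqTop A) V →
    (D i ∩ U).Nonempty → (D i ∩ V).Nonempty →
    ∃ N : ℕ, ∀ n : ℕ, N ≤ n →
      ((shiftMap^[p * n] '' (D i ∩ U)) ∩ (D i ∩ V)).Nonempty) ∧
  (∀ i j, i ≠ j → ∀ U : Set (ℤ → A), @IsOpen _ (seqTop A) U →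
    X ∩ U ⊆ D i ∩ D j → X ∩ U = ∅)

/-- A left ray of `X`, recorded as `z : ℕ → A` where `z n` is the symbol at
coordinate `-(n+1)`. -/
def IsLeftRay {A : Type*} (X : Set (ℤ → A)) (z : ℕ → A) : Prop :=
  ∃ x ∈ X, ∀ n : ℕ, x (-((n : ℤ) + 1)) = z n

/-- Append the finite word `w` on the right of a left-infinite sequence `z`
(the last symbol of `w` ends up at coordinate `-1`). -/
def rayAppend {A : Type*} (z : ℕ → A) (w : List A) : ℕ → A :=
  fun n => if h : n < w.length then w.reverse.get ⟨n, by simpa using h⟩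
           else z (n - w.length)

/-- A left transitive point: every word of `X` occurs in `x_{(-∞,0]}`. -/
def IsLeftTransitive {A : Type*} (X : Set (ℤ → A)) (x : ℤ → A) : Prop :=
  ∀ u : List A, IsWordOf X u → ∃ i : ℤ, i + (u.length : ℤ) ≤ 1 ∧ OccursAt x u i

/-- A right transitive point: every word of `X` occurs in `x_{[0,∞)}`. -/
def IsRightTransitive {A : Type*} (X : Set (ℤ → A)) (x : ℤ → A) : Prop :=
  ∀ u : List A, IsWordOf X u → ∃ i : ℤ, 0 ≤ i ∧ OccursAt x u i

/-- Right continuing almost everywhere. -/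
def IsRightContinuingAE {A B : Type*} (X : Set (ℤ → A)) (Y : Set (ℤ → B))
    (φ : (ℤ → A) → (ℤ → B)) : Prop :=
  ∀ x ∈ X, IsLeftTransitive X x → ∀ y ∈ Y, (∃ M : ℤ, ∀ i ≤ M, φ x i = y i) →
    ∃ x' ∈ X, (∃ M : ℤ, ∀ i ≤ M, x' i = x i) ∧ φ x' = y

/-- Left continuing almost everywhere. -/
def IsLeftContinuingAE {A B : Type*} (X : Set (ℤ → A)) (Y : Set (ℤ → B))
    (φ : (ℤ → A) → (ℤ → B)) : Prop :=
  ∀ x ∈ X, IsRightTransitive X x → ∀ y ∈ Y, (∃ M : ℤ, ∀ i, M ≤ i → φ x i = y i) →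
    ∃ x' ∈ X, (∃ M : ℤ, ∀ i, M ≤ i → x' i = x i) ∧ φ x' = y

/-- The bi-infinite concatenations of blocks `1 0^s`, `s ∈ S`: the positions of
`1`s in `x` form the range of a strictly monotone `t : ℤ → ℤ` whose
consecutive gaps `t (n+1) - t n` all equal `s + 1` for some `s ∈ S`. -/
def GapConcat (S : Set ℕ) : Set (ℤ → Bool) :=
  { x | ∃ t : ℤ → ℤ, StrictMono t ∧ (∀ n : ℤ, ∃ s ∈ S, t (n + 1) = t n + (s : ℤ) + 1) ∧
      (∀ i : ℤ, x i = true ↔ ∃ n : ℤ, t n = i) }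

/-- The `S`-gap shift: the smallest shift space over `{0,1}` containing all
bi-infinite concatenations of blocks from `{1 0^s : s ∈ S}`. -/
def SGapShift (S : Set ℕ) : Set (ℤ → Bool) :=
  ⋂₀ { X : Set (ℤ → Bool) | IsShiftSpace X ∧ GapConcat S ⊆ X }

namespace ScratchH

variable {A B : Type*}

def backShift (x : ℤ → A) : ℤ → A := fun i => x (i - 1)

lemma shiftMap_backShift (x : ℤ → A) : shiftMap (backShift x) = x := by
  funext i; simp [shiftMap, backShift]

lemma shiftMap_inj : Function.Injective (shiftMap (A := A)) := by
  intro a b h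
  funext i
  have := congrFun h (i - 1)
  simpa [shiftMap] using this

lemma S_apply (m : ℕ) (x : ℤ → A) (i : ℤ) : shiftMap^[m] x i = x (i + m) := by
  induction m generalizing i with
  | zero => simp
  | succ n ih =>
    rw [Function.iterate_succ_apply', shiftMap, ih]
    congr 1
    push_cast
    ring

lemma T_apply (m : ℕ) (x : ℤ → A) (i : ℤ) : backShift^[m] x i = x (i - m) := by
  induction m generalizing i with
  | zero => simp
  | succ n ih =>
    rw [Function.iterate_succ_apply', backShift, ih]
    congr 1
    push_cast
    ring

lemma S_T (m : ℕ) (x : ℤ → A) : shiftMap^[m] (backShift^[m] x) = x := by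
  funext i; rw [S_apply, T_apply]; congr 1; ring

lemma T_S (m : ℕ) (x : ℤ → A) : backShift^[m] (shiftMap^[m] x) = x := by
  funext i; rw [T_apply, S_apply]; congr 1; ring

lemma mem_S {X : Set (ℤ → A)} (hX : shiftMap '' X = X) {x} (hx : x ∈ X) (m : ℕ) :
    shiftMap^[m] x ∈ X := by
  induction m with
  | zero => simpa
  | succ n ih =>
    rw [Function.iterate_succ_apply']
    exact hX ▸ Set.mem_image_of_mem _ ih

lemma mem_back {X : Set (ℤ → A)} (hX : shiftMap '' X = X) {x} (hx : x ∈ X) :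
    backShift x ∈ X := by
  have hx' : x ∈ shiftMap '' X := hX.symm ▸ hx
  obtain ⟨z, hz, hzx⟩ := hx'
  have : z = backShift x := shiftMap_inj (hzx.trans (shiftMap_backShift x).symm)
  rwa [← this]

lemma mem_T {X : Set (ℤ → A)} (hX : shiftMap '' X = X) {x} (hx : x ∈ X) (m : ℕ) :
    backShift^[m] x ∈ X := by
  induction m with
  | zero => simpa
  | succ n ih =>
    rw [Function.iterate_succ_apply']
    exact mem_back hX ih

variable {X : Set (ℤ → A)} {φ : (ℤ → A) → (ℤ → B)}

lemma comm_S (hX : shiftMap '' X = X)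
    (hc : ∀ x ∈ X, φ (shiftMap x) = shiftMap (φ x)) {x} (hx : x ∈ X) (m : ℕ) :
    φ (shiftMap^[m] x) = shiftMap^[m] (φ x) := by
  induction m with
  | zero => simp
  | succ n ih =>
    rw [Function.iterate_succ_apply', Function.iterate_succ_apply',
      hc _ (mem_S hX hx n), ih]

lemma comm_back (hX : shiftMap '' X = X)
    (hc : ∀ x ∈ X, φ (shiftMap x) = shiftMap (φ x)) {x} (hx : x ∈ X) :
    φ (backShift x) = backShift (φ x) := by
  apply shiftMap_inj
  rw [← hc _ (mem_back hX hx), shiftMap_backShift, shiftMap_backShift]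

lemma comm_T (hX : shiftMap '' X = X)
    (hc : ∀ x ∈ X, φ (shiftMap x) = shiftMap (φ x)) {x} (hx : x ∈ X) (m : ℕ) :
    φ (backShift^[m] x) = backShift^[m] (φ x) := by
  induction m with
  | zero => simp
  | succ n ih =>
    rw [Function.iterate_succ_apply', Function.iterate_succ_apply',
      comm_back hX hc (mem_T hX hx n), ih]

lemma key_right {A B : Type*} [Fintype A] [Fintype B]
    {X : Set (ℤ → A)} {Y : Set (ℤ → B)} {φ : (ℤ → A) → (ℤ → B)}
    (hX : IsShiftSpace X) (hY : IsShiftSpace Y) (hφ : IsCode X Y φ)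
    {l : ℕ}
    (hl : ∀ k : ℕ, ∀ x ∈ X, ∀ y ∈ Y, (∀ i : ℤ, |i| ≤ (k : ℤ) + (l : ℤ) → φ x i = y i) →
      ∃ x' ∈ X, (∀ i : ℤ, |i| ≤ (k : ℤ) → x' i = x i) ∧ φ x' = y)
    {x y} (hx : x ∈ X) (hy : y ∈ Y) (h : ∀ i : ℤ, i ≤ 0 → φ x i = y i) :
    ∃ x' ∈ X, φ x' = y ∧ ∀ i : ℤ, i ≤ -(l : ℤ) → x' i = x i := by
  obtain ⟨-, hXcl, hXinv⟩ := hX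
  obtain ⟨-, -, hYinv⟩ := hY
  obtain ⟨-, hcont, hcomm⟩ := hφ
  -- Step 1: approximate lifts
  have step1 : ∀ k : ℕ, ∃ z ∈ X, φ z = y ∧
      ∀ i : ℤ, -(2 * (k : ℤ) + (l : ℤ)) ≤ i → i ≤ -(l : ℤ) → z i = x i := by
    intro k
    set m : ℕ := k + l with hm
    have hu0 : backShift^[m] x ∈ X := mem_T hXinv hx m
    have hv0 : backShift^[m] y ∈ Y := mem_T hYinv hy m
    have hagree : ∀ i : ℤ, |i| ≤ (k : ℤ) + (l : ℤ) →
        φ (backShift^[m] x) i = backShift^[m] y i := by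
      intro i hi
      rw [comm_T hXinv hcomm hx m, T_apply, T_apply]
      apply h
      have h1 : i ≤ (k : ℤ) + l := (abs_le.mp hi).2
      have h2 : (m : ℤ) = (k : ℤ) + l := by push_cast [hm]; ring
      omega
    obtain ⟨u', hu'X, hu'a, hu'φ⟩ := hl k _ hu0 _ hv0 hagree
    refine ⟨shiftMap^[m] u', mem_S hXinv hu'X m, ?_, ?_⟩
    · rw [comm_S hXinv hcomm hu'X m, hu'φ, S_T]
    · intro i hi1 hi2
      have h2 : (m : ℤ) = (k : ℤ) + l := by push_cast [hm]; ring
      rw [S_apply]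
      have habs : |i + (m : ℤ)| ≤ (k : ℤ) := by rw [abs_le]; omega
      rw [hu'a _ habs, T_apply]
      congr 1
      ring
  choose u huX huφ hua using step1
  -- Step 2: compactness
  letI tA : TopologicalSpace A := ⊥
  letI tB : TopologicalSpace B := ⊥
  haveI : DiscreteTopology A := ⟨rfl⟩
  haveI : DiscreteTopology B := ⟨rfl⟩
  have hXcl' : IsClosed X := hXcl
  have hcont' : ContinuousOn φ X := hcont
  have hfle : Filter.map u Filter.atTop ≤ 𝓟 X :=
    Filter.le_principal_iff.mpr (Filter.mem_map.mpr (Filter.Eventually.of_forall huX))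
  obtain ⟨x', hx'X, hcl⟩ := hXcl'.isCompact.exists_clusterPt hfle
  have key : ∀ s : Set (ℤ → A), IsClosed s → (∀ᶠ k in Filter.atTop, u k ∈ s) → x' ∈ s := by
    intro s hs hev
    have : ClusterPt x' (𝓟 s) :=
      hcl.mono (Filter.le_principal_iff.mpr (Filter.mem_map.mpr hev))
    exact hs.closure_eq ▸ mem_closure_iff_clusterPt.mpr this
  refine ⟨x', hx'X, ?_, ?_⟩
  · have hs : IsClosed (X ∩ φ ⁻¹' {y}) :=
      hcont'.preimage_isClosed_of_isClosed hXcl' isClosed_singleton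
    have := key _ hs (Filter.Eventually.of_forall fun k => ⟨huX k, huφ k⟩)
    exact this.2
  · intro i hi
    have hs : IsClosed ((fun z : ℤ → A => z i) ⁻¹' {x i}) :=
      IsClosed.preimage (continuous_apply i) isClosed_singleton
    have hev : ∀ᶠ k in Filter.atTop, u k ∈ (fun z : ℤ → A => z i) ⁻¹' {x i} := by
      refine Filter.eventually_atTop.mpr ⟨(-i).toNat, fun k hk => ?_⟩
      have hk' : -i ≤ (k : ℤ) := Int.toNat_le.mp hk
      exact hua k i (by omega) hi
    exact key _ hs hev



lemma key_left {A B : Type*} [Fintype A] [Fintype B]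
    {X : Set (ℤ → A)} {Y : Set (ℤ → B)} {φ : (ℤ → A) → (ℤ → B)}
    (hX : IsShiftSpace X) (hY : IsShiftSpace Y) (hφ : IsCode X Y φ)
    {l : ℕ}
    (hl : ∀ k : ℕ, ∀ x ∈ X, ∀ y ∈ Y, (∀ i : ℤ, |i| ≤ (k : ℤ) + (l : ℤ) → φ x i = y i) →
      ∃ x' ∈ X, (∀ i : ℤ, |i| ≤ (k : ℤ) → x' i = x i) ∧ φ x' = y)
    {x y} (hx : x ∈ X) (hy : y ∈ Y) (h : ∀ i : ℤ, 0 ≤ i → φ x i = y i) :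
    ∃ x' ∈ X, φ x' = y ∧ ∀ i : ℤ, (l : ℤ) ≤ i → x' i = x i := by
  obtain ⟨-, hXcl, hXinv⟩ := hX
  obtain ⟨-, -, hYinv⟩ := hY
  obtain ⟨-, hcont, hcomm⟩ := hφ
  have step1 : ∀ k : ℕ, ∃ z ∈ X, φ z = y ∧
      ∀ i : ℤ, (l : ℤ) ≤ i → i ≤ 2 * (k : ℤ) + (l : ℤ) → z i = x i := by
    intro k
    set m : ℕ := k + l with hm
    have h2 : (m : ℤ) = (k : ℤ) + l := by push_cast [hm]; ring
    have hu0 : shiftMap^[m] x ∈ X := mem_S hXinv hx m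
    have hv0 : shiftMap^[m] y ∈ Y := mem_S hYinv hy m
    have hagree : ∀ i : ℤ, |i| ≤ (k : ℤ) + (l : ℤ) →
        φ (shiftMap^[m] x) i = shiftMap^[m] y i := by
      intro i hi
      rw [comm_S hXinv hcomm hx m, S_apply, S_apply]
      apply h
      have h1 : -((k : ℤ) + l) ≤ i := (abs_le.mp hi).1
      omega
    obtain ⟨u', hu'X, hu'a, hu'φ⟩ := hl k _ hu0 _ hv0 hagree
    refine ⟨backShift^[m] u', mem_T hXinv hu'X m, ?_, ?_⟩
    · rw [comm_T hXinv hcomm hu'X m, hu'φ, T_S]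
    · intro i hi1 hi2
      rw [T_apply]
      have habs : |i - (m : ℤ)| ≤ (k : ℤ) := by rw [abs_le]; omega
      rw [hu'a _ habs, S_apply]
      congr 1
      ring
  choose u huX huφ hua using step1
  letI tA : TopologicalSpace A := ⊥
  letI tB : TopologicalSpace B := ⊥
  haveI : DiscreteTopology A := ⟨rfl⟩
  haveI : DiscreteTopology B := ⟨rfl⟩
  have hXcl' : IsClosed X := hXcl
  have hcont' : ContinuousOn φ X := hcont
  have hfle : Filter.map u Filter.atTop ≤ 𝓟 X :=
    Filter.le_principal_iff.mpr (Filter.mem_map.mpr (Filter.Eventually.of_forall huX))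
  obtain ⟨x', hx'X, hcl⟩ := hXcl'.isCompact.exists_clusterPt hfle
  have key : ∀ s : Set (ℤ → A), IsClosed s → (∀ᶠ k in Filter.atTop, u k ∈ s) → x' ∈ s := by
    intro s hs hev
    have : ClusterPt x' (𝓟 s) :=
      hcl.mono (Filter.le_principal_iff.mpr (Filter.mem_map.mpr hev))
    exact hs.closure_eq ▸ mem_closure_iff_clusterPt.mpr this
  refine ⟨x', hx'X, ?_, ?_⟩
  · have hs : IsClosed (X ∩ φ ⁻¹' {y}) :=
      hcont'.preimage_isClosed_of_isClosed hXcl' isClosed_singleton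
    exact (key _ hs (Filter.Eventually.of_forall fun k => ⟨huX k, huφ k⟩)).2
  · intro i hi
    have hs : IsClosed ((fun z : ℤ → A => z i) ⁻¹' {x i}) :=
      IsClosed.preimage (continuous_apply i) isClosed_singleton
    have hev : ∀ᶠ k in Filter.atTop, u k ∈ (fun z : ℤ → A => z i) ⁻¹' {x i} := by
      refine Filter.eventually_atTop.mpr ⟨i.toNat, fun k hk => ?_⟩
      have hk' : i ≤ (k : ℤ) := Int.toNat_le.mp hk
      exact hua k i hi (by omega)
    exact key _ hs hev


end ScratchH
open ScratchH

/-- An open code with a uniform lifting length between shift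
spaces is bi-continuing with a bi-retract. -/
theorem open_ull_implies_bicontinuing_biretract
    {A B : Type*} [Fintype A] [Fintype B]
    (X : Set (ℤ → A)) (Y : Set (ℤ → B)) (φ : (ℤ → A) → (ℤ → B))
    (hX : IsShiftSpace X) (hY : IsShiftSpace Y) (hφ : IsCode X Y φ)
    (hopen : IsOpenCode X Y φ) (hull : HasUniformLiftingLength X Y φ) :
    (IsRightContinuing X Y φ ∧ IsLeftContinuing X Y φ) ∧
      ∃ n : ℕ, IsRightRetract X Y φ n ∧ IsLeftRetract X Y φ n := by
  obtain ⟨l, hl⟩ := hull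
  have hR : IsRightRetract X Y φ l := by
    intro x hx y hy h
    obtain ⟨x', h1, h2, h3⟩ := ScratchH.key_right hX hY hφ hl hx hy h
    exact ⟨x', h1, h2, h3⟩
  have hL : IsLeftRetract X Y φ l := by
    intro x hx y hy h
    obtain ⟨x', h1, h2, h3⟩ := ScratchH.key_left hX hY hφ hl hx hy h
    exact ⟨x', h1, h2, h3⟩
  have hXinv := hX.2.2
  have hYinv := hY.2.2
  have hcomm := hφ.2.2
  refine ⟨⟨?_, ?_⟩, l, hR, hL⟩
  · -- right continuing
    intro x hx y hy hMex
    obtain ⟨M, hM⟩ := hMex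
    set M' : ℤ := min M 0 with hM'def
    have hM'le : M' ≤ 0 := min_le_right M 0
    have hM'M : M' ≤ M := min_le_left M 0
    set m : ℕ := (-M').toNat with hmdef
    have hm : (m : ℤ) = -M' := Int.toNat_of_nonneg (by omega)
    have hu : backShift^[m] x ∈ X := ScratchH.mem_T hXinv hx m
    have hv : backShift^[m] y ∈ Y := ScratchH.mem_T hYinv hy m
    have hagree : ∀ i : ℤ, i ≤ 0 → φ (backShift^[m] x) i = backShift^[m] y i := by
      intro i hi
      rw [ScratchH.comm_T hXinv hcomm hx m, ScratchH.T_apply, ScratchH.T_apply]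
      exact hM _ (by omega)
    obtain ⟨x'', hx''X, hφx'', hagr⟩ := hR _ hu _ hv hagree
    refine ⟨shiftMap^[m] x'', ScratchH.mem_S hXinv hx''X m, ⟨-(l : ℤ) - m, ?_⟩, ?_⟩
    · intro i hi
      rw [ScratchH.S_apply, hagr (i + m) (by omega), ScratchH.T_apply]
      congr 1
      ring
    · rw [ScratchH.comm_S hXinv hcomm hx''X m, hφx'', ScratchH.S_T]
  · -- left continuing
    intro x hx y hy hMex
    obtain ⟨M, hM⟩ := hMex
    set M' : ℤ := max M 0 with hM'def
    have hM'le : 0 ≤ M' := le_max_right M 0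
    have hM'M : M ≤ M' := le_max_left M 0
    set m : ℕ := M'.toNat with hmdef
    have hm : (m : ℤ) = M' := Int.toNat_of_nonneg hM'le
    have hu : shiftMap^[m] x ∈ X := ScratchH.mem_S hXinv hx m
    have hv : shiftMap^[m] y ∈ Y := ScratchH.mem_S hYinv hy m
    have hagree : ∀ i : ℤ, 0 ≤ i → φ (shiftMap^[m] x) i = shiftMap^[m] y i := by
      intro i hi
      rw [ScratchH.comm_S hXinv hcomm hx m, ScratchH.S_apply, ScratchH.S_apply]
      exact hM _ (by omega)
    obtain ⟨x'', hx''X, hφx'', hagr⟩ := hL _ hu _ hv hagree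
    refine ⟨backShift^[m] x'', ScratchH.mem_T hXinv hx''X m, ⟨(l : ℤ) + m, ?_⟩, ?_⟩
    · intro i hi
      rw [ScratchH.T_apply, hagr (i - m) (by omega), ScratchH.S_apply]
      congr 1
      ring
    · rw [ScratchH.comm_T hXinv hcomm hx''X m, hφx'', ScratchH.T_S]
end

section
/- Let φ : X → Y be a code between shift spaces and suppose Y is a shift of finite type. If φ is bi-continuing with a bi-retract, then φ is open and has a uniform lifting length. -/
open Set Filter

/-! Since `Y` is a shift of finite type with forbidden words of length at most `m`, two points of
`Y` that agree on a window of length `m` can be spliced there. Given `x ∈ X` and `y ∈ Y` with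
`φ x` and `y` agreeing on `[-l, l]`, splice `φ x` (left of `l`) with `y` (right of `l`); the right
retract lifts the splice by a point that agrees with `x` up to `l - n`, and the left retract then
lifts `y` by a point that agrees with the previous one from `-l + n` on. With `l = k + n + m` this
is a uniform lifting length `n + m`, and a code with a uniform lifting length is open because the
image of a cylinder contains a cylinder around each of its points. -/

section

attribute [local instance] seqTop

variable {A B : Type*}

def shiftBy (c : ℤ) (x : ℤ → A) : ℤ → A := fun i => x (i + c)

lemma shiftBy_zero (x : ℤ → A) : shiftBy 0 x = x := funext fun i => congrArg x (add_zero i)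

lemma shiftMap_shiftBy (c : ℤ) (x : ℤ → A) : shiftMap (shiftBy c x) = shiftBy (c + 1) x := by
  funext i
  simp only [shiftMap, shiftBy]
  ring_nf

lemma shiftMap_injective : Function.Injective (shiftMap (A := A)) := fun _ _ h =>
  funext fun i => by simpa [shiftMap] using congrFun h (i - 1)

lemma shiftBy_mem {X : Set (ℤ → A)} (hX : shiftMap '' X = X) {x : ℤ → A} (hx : x ∈ X) (c : ℤ) :
    shiftBy c x ∈ X := by
  induction c using Int.induction_on with
  | zero => rwa [shiftBy_zero]
  | succ c ih => rw [← shiftMap_shiftBy, ← hX]; exact mem_image_of_mem _ ih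
  | pred c ih =>
    rw [← hX] at ih
    obtain ⟨w, hw, hw_eq⟩ := ih
    convert hw
    apply shiftMap_injective
    rw [hw_eq, shiftMap_shiftBy, sub_add_cancel]

lemma map_shiftBy {X : Set (ℤ → A)} {φ : (ℤ → A) → (ℤ → B)} (hX : shiftMap '' X = X)
    (hφ : ∀ x ∈ X, φ (shiftMap x) = shiftMap (φ x)) {x : ℤ → A} (hx : x ∈ X) (c : ℤ) :
    φ (shiftBy c x) = shiftBy c (φ x) := by
  induction c using Int.induction_on with
  | zero => rw [shiftBy_zero, shiftBy_zero]
  | succ c ih => rw [← shiftMap_shiftBy, hφ _ (shiftBy_mem hX hx c), ih, shiftMap_shiftBy]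
  | pred c ih =>
    apply shiftMap_injective
    rw [← hφ _ (shiftBy_mem hX hx _), shiftMap_shiftBy, shiftMap_shiftBy, sub_add_cancel, ih]

section Retract

variable {X : Set (ℤ → A)} {Y : Set (ℤ → B)} {φ : (ℤ → A) → (ℤ → B)} {n : ℕ}
  (hX : shiftMap '' X = X) (hY : shiftMap '' Y = Y)
  (hφ : ∀ x ∈ X, φ (shiftMap x) = shiftMap (φ x))
include hX hY hφ

lemma IsRightRetract.exists_lift_at (hr : IsRightRetract X Y φ n) (c : ℤ) {x : ℤ → A}
    (hx : x ∈ X) {y : ℤ → B} (hy : y ∈ Y) (hxy : ∀ i ≤ c, φ x i = y i) :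
    ∃ x' ∈ X, φ x' = y ∧ ∀ i ≤ c - n, x' i = x i := by
  obtain ⟨z, hz, hφz, hzx⟩ := hr (shiftBy c x) (shiftBy_mem hX hx c) (shiftBy c y)
    (shiftBy_mem hY hy c) fun i hi => by
      rw [map_shiftBy hX hφ hx]; exact hxy (i + c) (by omega)
  refine ⟨shiftBy (-c) z, shiftBy_mem hX hz _, ?_, fun i hi => ?_⟩
  · rw [map_shiftBy hX hφ hz, hφz]; funext i; simp [shiftBy]
  · simpa [shiftBy, ← sub_eq_add_neg] using hzx (i - c) (by omega)

lemma IsLeftRetract.exists_lift_at (hl : IsLeftRetract X Y φ n) (c : ℤ) {x : ℤ → A}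
    (hx : x ∈ X) {y : ℤ → B} (hy : y ∈ Y) (hxy : ∀ i, c ≤ i → φ x i = y i) :
    ∃ x' ∈ X, φ x' = y ∧ ∀ i, c + n ≤ i → x' i = x i := by
  obtain ⟨z, hz, hφz, hzx⟩ := hl (shiftBy c x) (shiftBy_mem hX hx c) (shiftBy c y)
    (shiftBy_mem hY hy c) fun i hi => by
      rw [map_shiftBy hX hφ hx]; exact hxy (i + c) (by omega)
  refine ⟨shiftBy (-c) z, shiftBy_mem hX hz _, ?_, fun i hi => ?_⟩
  · rw [map_shiftBy hX hφ hz, hφz]; funext i; simp [shiftBy]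
  · simpa [shiftBy, ← sub_eq_add_neg] using hzx (i - c) (by omega)

end Retract

def splice (c : ℤ) (y₁ y₂ : ℤ → B) : ℤ → B := fun i => if i ≤ c then y₁ i else y₂ i

lemma splice_mem {Y : Set (ℤ → B)} {F : Finset (List B)}
    (hYF : Y = {y | ∀ u ∈ F, ∀ i : ℤ, ¬ OccursAt y u i}) {m : ℕ} (hm : ∀ u ∈ F, u.length ≤ m)
    {y₁ y₂ : ℤ → B} (hy₁ : y₁ ∈ Y) (hy₂ : y₂ ∈ Y) (c : ℤ)
    (hagree : ∀ i, c - m < i → i ≤ c → y₁ i = y₂ i) : splice c y₁ y₂ ∈ Y := by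
  subst hYF
  intro u hu i hocc
  have hum : (u.length : ℤ) ≤ m := by exact_mod_cast hm u hu
  by_cases hi : i ≤ c - m
  · refine hy₁ u hu i fun k => ?_
    have hk : i + k ≤ c := by have := k.isLt; omega
    simpa [splice, hk] using hocc k
  · refine hy₂ u hu i fun k => ?_
    by_cases hk : i + k ≤ c
    · rw [← hagree _ (by omega) hk]
      simpa [splice, hk] using hocc k
    · simpa [splice, hk] using hocc k

theorem hasUniformLiftingLength_of_retracts {X : Set (ℤ → A)} {Y : Set (ℤ → B)}
    {φ : (ℤ → A) → (ℤ → B)} {n : ℕ} (hX : shiftMap '' X = X) (hY : IsSFT Y)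
    (hφ : IsCode X Y φ) (hr : IsRightRetract X Y φ n) (hl : IsLeftRetract X Y φ n) :
    HasUniformLiftingLength X Y φ := by
  obtain ⟨⟨-, -, hYinv⟩, F, hYF⟩ := hY
  set m := F.sup List.length
  refine ⟨n + m, fun k x hx y hy hxy => ?_⟩
  set l : ℤ := k + n + m
  have hxy' : ∀ i, -l ≤ i → i ≤ l → φ x i = y i := fun i h₁ h₂ =>
    hxy i (by rw [abs_le]; push_cast; omega)
  have hspl : splice l (φ x) y ∈ Y :=
    splice_mem hYF (fun u hu => Finset.le_sup hu) (hφ.1 hx) hy l fun i h₁ h₂ =>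
      hxy' i (by omega) h₂
  obtain ⟨x₁, hx₁, hφx₁, hx₁x⟩ := hr.exists_lift_at hX hYinv hφ.2.2 l hx hspl fun i hi => by
    simp [splice, hi]
  obtain ⟨x₂, hx₂, hφx₂, hx₂x₁⟩ := hl.exists_lift_at hX hYinv hφ.2.2 (-l) hx₁ hy fun i hi => by
    rw [hφx₁, splice]
    split_ifs with h
    exacts [hxy' i hi h, rfl]
  refine ⟨x₂, hx₂, fun i hi => ?_, hφx₂⟩
  rw [abs_le] at hi
  rw [hx₂x₁ i (by omega), hx₁x i (by omega)]

def cylinder (x : ℤ → A) (k : ℕ) : Set (ℤ → A) := {x' | ∀ i : ℤ, |i| ≤ k → x' i = x i}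

lemma isOpen_cylinder (x : ℤ → A) (k : ℕ) : IsOpen (cylinder x k) := by
  let _ : TopologicalSpace A := ⊥
  have : DiscreteTopology A := ⟨rfl⟩
  have hpi : cylinder x k = (Icc (-(k : ℤ)) k).pi fun i => {x i} := by
    ext x'
    simp [cylinder, abs_le]
  rw [hpi]
  exact isOpen_set_pi (finite_Icc _ _) fun i _ => isOpen_discrete _

lemma exists_cylinder_subset {U : Set (ℤ → A)} (hU : IsOpen U) {x : ℤ → A} (hx : x ∈ U) :
    ∃ k : ℕ, cylinder x k ⊆ U := by
  let _ : TopologicalSpace A := ⊥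
  obtain ⟨I, u, hu, hIu⟩ := isOpen_pi_iff.mp hU x hx
  refine ⟨I.sup Int.natAbs, fun x' hx' => hIu fun i hi => ?_⟩
  rw [hx' i (by rw [Int.abs_eq_natAbs]; exact_mod_cast Finset.le_sup hi)]
  exact (hu i hi).2

theorem isOpenCode_of_hasUniformLiftingLength {X : Set (ℤ → A)} {Y : Set (ℤ → B)}
    {φ : (ℤ → A) → (ℤ → B)} (hφ : MapsTo φ X Y) (h : HasUniformLiftingLength X Y φ) :
    IsOpenCode X Y φ := by
  obtain ⟨l, hl⟩ := h
  intro U hU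
  choose! k hk using fun x (hx : x ∈ U) => exists_cylinder_subset hU hx
  refine ⟨⋃ x ∈ X ∩ U, cylinder (φ x) (k x + l),
    isOpen_biUnion fun x _ => isOpen_cylinder _ _, ?_⟩
  ext y
  constructor
  · rintro ⟨x, hx, rfl⟩
    exact ⟨hφ hx.1, mem_biUnion hx fun i _ => rfl⟩
  · rintro ⟨hy, hyV⟩
    obtain ⟨x, hx, hyx⟩ := mem_iUnion₂.mp hyV
    obtain ⟨x', hx', hx'x, rfl⟩ := hl (k x) x hx.1 y hy fun i hi =>
      (hyx i (by push_cast; exact hi)).symm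
    exact ⟨x', ⟨hx', hk x hx.2 hx'x⟩, rfl⟩

end

theorem bicontinuing_biretract_implies_open_ull_general
    {A B : Type*}
    (X : Set (ℤ → A)) (Y : Set (ℤ → B)) (φ : (ℤ → A) → (ℤ → B))
    (hX : IsShiftSpace X) (hY : IsSFT Y) (hφ : IsCode X Y φ)
    (hret : ∃ n : ℕ, IsRightRetract X Y φ n ∧ IsLeftRetract X Y φ n) :
    IsOpenCode X Y φ ∧ HasUniformLiftingLength X Y φ := by
  obtain ⟨n, hr, hl⟩ := hret
  have hull := hasUniformLiftingLength_of_retracts hX.2.2 hY hφ hr hl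
  exact ⟨isOpenCode_of_hasUniformLiftingLength hφ.1 hull, hull⟩

/-- If the codomain is a shift of finite type, then a
bi-continuing code with a bi-retract is open with a uniform lifting length. -/
theorem bicontinuing_biretract_implies_open_ull
    {A B : Type*} [Fintype A] [Fintype B]
    (X : Set (ℤ → A)) (Y : Set (ℤ → B)) (φ : (ℤ → A) → (ℤ → B))
    (hX : IsShiftSpace X) (hY : IsSFT Y) (hφ : IsCode X Y φ)
    (hrc : IsRightContinuing X Y φ) (hlc : IsLeftContinuing X Y φ)
    (hret : ∃ n : ℕ, IsRightRetract X Y φ n ∧ IsLeftRetract X Y φ n) :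
    IsOpenCode X Y φ ∧ HasUniformLiftingLength X Y φ :=
  bicontinuing_biretract_implies_open_ull_general X Y φ hX hY hφ hret
end

section
/- If X is an almost specified shift space, then X is a synchronized system; that is, X is irreducible and possesses a synchronizing word. -/
open Set Filter

private lemma shiftIter_apply' {A : Type*} (x : ℤ → A) (n : ℕ) (i : ℤ) :
    (shiftMap^[n] x) i = x (i + n) := by
  induction n generalizing x i with
  | zero => simp
  | succ n ih =>
    rw [Function.iterate_succ_apply, ih]
    simp [shiftMap]; ring_nf

private lemma isWordOf_prefix' {A : Type*} {X : Set (ℤ → A)} {u v : List A}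
    (h : IsWordOf X (u ++ v)) : IsWordOf X u := by
  obtain ⟨x, hx, hocc⟩ := h
  refine ⟨x, hx, fun k => ?_⟩
  have hk : (k : ℕ) < (u ++ v).length := by
    simp only [List.length_append]; omega
  have := hocc ⟨k, hk⟩
  simpa [List.get_eq_getElem, List.getElem_append_left] using this

private lemma isWordOf_suffix' {A : Type*} {X : Set (ℤ → A)} (hinv : shiftMap '' X = X)
    {u v : List A} (h : IsWordOf X (u ++ v)) : IsWordOf X v := by
  obtain ⟨x, hx, hocc⟩ := h
  have hmem : shiftMap^[u.length] x ∈ X := by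
    clear hocc
    induction u.length with
    | zero => simpa
    | succ n ih =>
      rw [Function.iterate_succ_apply']
      rw [← hinv]; exact Set.mem_image_of_mem _ ih
  refine ⟨shiftMap^[u.length] x, hmem, fun k => ?_⟩
  have hk : u.length + (k : ℕ) < (u ++ v).length := by
    simp only [List.length_append]; omega
  have h2 := hocc ⟨u.length + k, hk⟩
  rw [shiftIter_apply']
  have heq : (0 : ℤ) + (k : ℕ) + (u.length : ℕ) = 0 + ((u.length + (k : ℕ) : ℕ) : ℤ) := by
    push_cast; ring
  rw [heq]
  simpa [List.get_eq_getElem, List.getElem_append_right] using h2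

/-- An almost specified shift space is a synchronized system:
it is irreducible and has a synchronizing word. -/
theorem almostSpecified_is_synchronized
    {A : Type*} [Fintype A] (X : Set (ℤ → A))
    (hX : IsShiftSpace X) (hAS : AlmostSpecified X) :
    IsIrreducibleShift X ∧ ∃ v : List A, IsSynchronizingWord X v := by
  
  obtain ⟨N, hN⟩ := hAS
  have hinv := hX.2.2
  have hirr : IsIrreducibleShift X := by
    intro u v hu hv
    obtain ⟨w, _, hw⟩ := hN u v hu hv
    exact ⟨w, hw⟩
  refine ⟨hirr, ?_⟩
  set W : List A → List A → Set (List A) :=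
    fun u v => {w | w.length ≤ N ∧ IsWordOf X (u ++ w ++ v)} with hWdef
  have hfin : ∀ u v, (W u v).Finite := fun u v =>
    (List.finite_length_le A N).subset (fun w hw => hw.1)
  have hne : ∀ u v, IsWordOf X u → IsWordOf X v → (W u v).Nonempty := by
    intro u v hu hv
    obtain ⟨w, h1, h2⟩ := hN u v hu hv
    exact ⟨w, ⟨h1, h2⟩⟩
  have hnil : IsWordOf X ([] : List A) := by
    obtain ⟨x, hx⟩ := hX.1
    exact ⟨x, hx, fun k => k.elim0⟩
  set S : Set ℕ := {n | ∃ u v, IsWordOf X u ∧ IsWordOf X v ∧ (W u v).ncard = n} with hSdef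
  have hSne : S.Nonempty := ⟨_, [], [], hnil, hnil, rfl⟩
  obtain ⟨u₀, v₀, hu₀, hv₀, hm⟩ := Nat.sInf_mem hSne
  obtain ⟨w₀, hw₀⟩ := hne u₀ v₀ hu₀ hv₀
  refine ⟨u₀ ++ w₀ ++ v₀, hw₀.2, fun a b hav hvb => ?_⟩
  have hau : IsWordOf X (a ++ u₀) :=
    isWordOf_prefix' (u := a ++ u₀) (v := w₀ ++ v₀) (by simpa [List.append_assoc] using hav)
  have hvb' : IsWordOf X (v₀ ++ b) :=
    isWordOf_suffix' hinv (u := u₀ ++ w₀) (by simpa [List.append_assoc] using hvb)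
  have hsub : W (a ++ u₀) (v₀ ++ b) ⊆ W u₀ v₀ := by
    intro w hw
    refine ⟨hw.1, ?_⟩
    have h1 : IsWordOf X ((u₀ ++ w ++ v₀) ++ b) :=
      isWordOf_suffix' hinv (u := a) (by simpa [List.append_assoc] using hw.2)
    exact isWordOf_prefix' h1
  have hle : (W u₀ v₀).ncard ≤ (W (a ++ u₀) (v₀ ++ b)).ncard := by
    rw [hm]
    exact Nat.sInf_le ⟨_, _, hau, hvb', rfl⟩
  have heq := Set.eq_of_subset_of_ncard_le hsub hle (hfin _ _)
  have hmem : w₀ ∈ W (a ++ u₀) (v₀ ++ b) := by rw [heq]; exact hw₀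
  have := hmem.2
  simpa [List.append_assoc] using this
end

section
/- Let X be a mixing shift space. Then X has the almost specification property if and only if X has the specification property. -/
open Set Filter

lemma shift_iter_apply {A : Type*} (j : ℕ) (x : ℤ → A) (i : ℤ) :
    shiftMap^[j] x i = x (i + j) := by
  induction j generalizing x i with
  | zero => simp
  | succ j ih =>
    rw [Function.iterate_succ_apply]
    rw [ih]
    show x (i + j + 1) = _
    congr 1
    push_cast
    ring

lemma shift_iter_mem {A : Type*} {X : Set (ℤ → A)} (hX : IsShiftSpace X)
    {x : ℤ → A} (hx : x ∈ X) (j : ℕ) : shiftMap^[j] x ∈ X := by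
  induction j with
  | zero => simpa
  | succ j ih =>
    rw [Function.iterate_succ_apply']
    rw [← hX.2.2]
    exact ⟨_, ih, rfl⟩

lemma word_middle {A : Type*} {X : Set (ℤ → A)} (hX : IsShiftSpace X)
    {s m t : List A} (h : IsWordOf X (s ++ m ++ t)) : IsWordOf X m := by
  obtain ⟨x, hx, hocc⟩ := h
  refine ⟨shiftMap^[s.length] x, shift_iter_mem hX hx _, fun k => ?_⟩
  rw [shift_iter_apply]
  have hlen : s.length + (k : ℕ) < (s ++ m ++ t).length := by
    simp; omega
  have h2 := hocc ⟨s.length + (k : ℕ), hlen⟩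
  simp only [List.get_eq_getElem] at h2 ⊢
  have e1 : (s ++ m ++ t)[s.length + (k:ℕ)]'hlen = m[(k:ℕ)] := by
    rw [List.getElem_append_left (by simp [k.isLt] : s.length + (k:ℕ) < (s ++ m).length)]
    rw [List.getElem_append_right (by simp : s.length ≤ s.length + (k:ℕ))]
    simp
  rw [e1] at h2
  rw [← h2]
  congr 1
  push_cast
  ring


/-- For a mixing shift space, the almost specification
property is equivalent to the specification property. -/
theorem mixing_almostSpecified_iff_specification
    {A : Type*} [Fintype A] (X : Set (ℤ → A))
    (hX : IsShiftSpace X) (hmix : IsMixingShift X) :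
    AlmostSpecified X ↔ HasSpecification X := by
  constructor
  · rintro ⟨N, hN⟩
    classical
    set S : List A → List A → Set ℕ := fun u v =>
      {n | n ≤ N ∧ ∃ w : List A, w.length = n ∧ IsWordOf X (u ++ w ++ v)} with hS
    have hSfin : ∀ u v, (S u v).Finite := fun u v =>
      (Set.finite_Iic N).subset (fun n hn => hn.1)
    have hempty : IsWordOf X ([] : List A) := by
      obtain ⟨x, hx⟩ := hX.1
      exact ⟨x, hx, fun k => absurd k.isLt (by simp)⟩
    set M : Set ℕ := {m | ∃ u v : List A, IsWordOf X u ∧ IsWordOf X v ∧ (S u v).ncard = m}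
      with hM
    have hMne : M.Nonempty := ⟨_, [], [], hempty, hempty, rfl⟩
    obtain ⟨u₀, v₀, hu₀, hv₀, hcard⟩ := Nat.sInf_mem hMne
    have hstab : ∀ c d : List A, IsWordOf X (c ++ u₀) → IsWordOf X (v₀ ++ d) →
        S (c ++ u₀) (v₀ ++ d) = S u₀ v₀ := by
      intro c d hc hd
      have hsub : S (c ++ u₀) (v₀ ++ d) ⊆ S u₀ v₀ := by
        rintro n ⟨hn, w, hw, hword⟩
        exact ⟨hn, w, hw, word_middle hX (s := c) (t := d)
          (by simpa [List.append_assoc] using hword)⟩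
      have hle : (S u₀ v₀).ncard ≤ (S (c ++ u₀) (v₀ ++ d)).ncard := by
        rw [hcard]
        exact Nat.sInf_le ⟨_, _, hc, hd, rfl⟩
      exact Set.eq_of_subset_of_ncard_le hsub hle (hSfin _ _)
    obtain ⟨w₀, hw₀N, hw₀⟩ := hN u₀ v₀ hu₀ hv₀
    have hn₀mem : w₀.length ∈ S u₀ v₀ := ⟨hw₀N, w₀, rfl, hw₀⟩
    have star : ∀ c d : List A, IsWordOf X (c ++ u₀) → IsWordOf X (v₀ ++ d) →
        ∃ w : List A, w.length = w₀.length ∧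
          IsWordOf X (c ++ u₀ ++ w ++ v₀ ++ d) := by
      intro c d hc hd
      have hmem : w₀.length ∈ S (c ++ u₀) (v₀ ++ d) := by
        rw [hstab c d hc hd]; exact hn₀mem
      obtain ⟨-, w, hw, hword⟩ := hmem
      exact ⟨w, hw, by simpa [List.append_assoc] using hword⟩
    obtain ⟨T, hT⟩ := hmix v₀ u₀ hv₀ hu₀
    have chain : ∀ L : List ℕ,
        (∀ ℓ ∈ L, ∃ g : List A, g.length = ℓ ∧ IsWordOf X (v₀ ++ g ++ u₀)) →
        ∀ c : List A, IsWordOf X (c ++ u₀) → ∀ d : List A, IsWordOf X (v₀ ++ d) →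
        ∃ W : List A,
          W.length = w₀.length +
            (L.map (fun ℓ => w₀.length + v₀.length + u₀.length + ℓ)).sum ∧
          IsWordOf X (c ++ u₀ ++ W ++ v₀ ++ d) := by
      intro L
      induction L with
      | nil =>
        intro _ c hc d hd
        obtain ⟨w, hw, hword⟩ := star c d hc hd
        exact ⟨w, by simp [hw], hword⟩
      | cons ℓ L ih =>
        intro hL c hc d hd
        obtain ⟨g, hg, hgword⟩ := hL ℓ (by simp)
        obtain ⟨w₁, hw₁, hword₁⟩ := star c (g ++ u₀) hc
          (by simpa [List.append_assoc] using hgword)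
        have hc' : IsWordOf X ((c ++ u₀ ++ w₁ ++ v₀ ++ g) ++ u₀) := by
          simpa [List.append_assoc] using hword₁
        obtain ⟨W', hW', hword'⟩ := ih (fun ℓ' h => hL ℓ' (by simp [h])) _ hc' d hd
        refine ⟨w₁ ++ v₀ ++ g ++ u₀ ++ W', ?_, by simpa [List.append_assoc] using hword'⟩
        simp only [List.length_append, List.map_cons, List.sum_cons, hw₁, hg, hW']
        omega
    refine ⟨u₀.length + v₀.length + w₀.length +
      2*N*(w₀.length + v₀.length + u₀.length + T) + 2*N, ?_⟩
    intro u v hu hv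
    obtain ⟨α, hαN, hα⟩ := hN u u₀ hu hu₀
    obtain ⟨β, hβN, hβ⟩ := hN v₀ v hv₀ hv
    obtain ⟨j, hj⟩ := Nat.le.dest (show α.length + β.length ≤ 2*N by omega)
    set L : List ℕ := List.replicate j (T+1) ++
      List.replicate (α.length + β.length) T with hL
    have hLgood : ∀ ℓ ∈ L, ∃ g : List A, g.length = ℓ ∧ IsWordOf X (v₀ ++ g ++ u₀) := by
      intro ℓ hℓ
      rw [hL, List.mem_append, List.mem_replicate, List.mem_replicate] at hℓ
      rcases hℓ with ⟨-, h⟩ | ⟨-, h⟩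
      · rw [h]; exact hT (T+1) (by omega)
      · rw [h]; exact hT T le_rfl
    obtain ⟨W, hWlen, hWword⟩ := chain L hLgood (u ++ α)
      (by simpa [List.append_assoc] using hα) (β ++ v)
      (by simpa [List.append_assoc] using hβ)
    refine ⟨α ++ u₀ ++ W ++ v₀ ++ β, ?_, by simpa [List.append_assoc] using hWword⟩
    have hsum : (L.map (fun ℓ => w₀.length + v₀.length + u₀.length + ℓ)).sum
        = j * (w₀.length + v₀.length + u₀.length + T + 1)
          + (α.length + β.length) * (w₀.length + v₀.length + u₀.length + T) := by
      rw [hL, List.map_append, List.map_replicate, List.map_replicate, List.sum_append,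
        List.sum_replicate, List.sum_replicate, smul_eq_mul, smul_eq_mul]
      ring
    have key : j * (w₀.length + v₀.length + u₀.length + T + 1)
        + (α.length + β.length) * (w₀.length + v₀.length + u₀.length + T)
        + (α.length + β.length)
        = 2*N*(w₀.length + v₀.length + u₀.length + T) + 2*N := by
      have h2 : j + (α.length + β.length) = 2*N := by omega
      calc j * (w₀.length + v₀.length + u₀.length + T + 1)
            + (α.length + β.length) * (w₀.length + v₀.length + u₀.length + T)
            + (α.length + β.length)
          = (j + (α.length + β.length)) * (w₀.length + v₀.length + u₀.length + T)
            + (j + (α.length + β.length)) := by ring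
        _ = _ := by rw [h2]
    simp only [List.length_append, hWlen, hsum]
    omega
  · rintro ⟨N, hN⟩
    refine ⟨N, fun u v hu hv => ?_⟩
    obtain ⟨w, hw, hword⟩ := hN u v hu hv
    exact ⟨w, hw.le, hword⟩
end

section
/- Let X be a shift space. (1) X has the specification property if and only if there exists N ∈ ℕ such that for every left ray x⁻ of X and every u ∈ B(X) there exists w ∈ B_N(X) such that the left-infinite sequence x⁻wu is a left ray of X. (2) X is almost specified if and only if there exists N ∈ ℕ such that for every left ray x⁻ of X and every u ∈ B(X) there exists a word w with |w| ≤ N such that the left-infinite sequence x⁻wu is a left ray of X. -/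
open Set Filter

/-!
A left ray `z` is recovered, by compactness of `X`, from the words `rayWord z n` ending it,
and these are words of `X`. Hence gluing `z` to a word `u` amounts to gluing every `rayWord z n`
to `u`. When the gluing words range over a finite set, one of them serves infinitely many `n`,
hence all `n` because the language is closed under suffixes, hence the ray itself. Conversely,
every word ends some left ray, so gluing rays to words specialises to gluing words to words.
-/

section RayWords

variable {A : Type*}

/-- The word at coordinates `-n, …, -1` of the left ray `z`. -/
def rayWord (z : ℕ → A) (n : ℕ) : List A := ((List.range n).map z).reverse

@[simp]
lemma rayWord_zero (z : ℕ → A) : rayWord z 0 = [] := rfl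

@[simp]
lemma length_rayWord (z : ℕ → A) (n : ℕ) : (rayWord z n).length = n := by
  simp [rayWord]

lemma getElem_rayWord (z : ℕ → A) {n k : ℕ} (hk : k < (rayWord z n).length) :
    (rayWord z n)[k] = z (n - 1 - k) := by
  simp only [rayWord, List.getElem_reverse, List.getElem_map, List.getElem_range,
    List.length_map, List.length_range]

lemma rayWord_isSuffix (z : ℕ → A) {m n : ℕ} (h : m ≤ n) : rayWord z m <:+ rayWord z n := by
  have hrange : List.range m <+: List.range n := by
    simpa [List.take_range, h] using List.take_prefix m (List.range n)
  exact List.reverse_suffix.mpr (hrange.map z)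

lemma rayWord_rayAppend (z : ℕ → A) (w : List A) (n : ℕ) :
    rayWord (rayAppend z w) (n + w.length) = rayWord z n ++ w := by
  refine List.ext_getElem (by simp) fun k hk _ => ?_
  simp only [length_rayWord] at hk
  rw [getElem_rayWord, List.getElem_append]
  split_ifs with hkn
  · simp only [rayAppend, getElem_rayWord, length_rayWord] at hkn ⊢
    rw [dif_neg (by omega)]
    congr 1; omega
  · simp only [length_rayWord] at hkn
    simp only [rayAppend, dif_pos (show n + w.length - 1 - k < w.length by omega),
      List.get_eq_getElem, List.getElem_reverse, length_rayWord]
    congr 1; omega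

lemma occursAt_rayWord_iff {x : ℤ → A} {z : ℕ → A} {n : ℕ} :
    OccursAt x (rayWord z n) (-n) ↔ ∀ m < n, x (-((m : ℤ) + 1)) = z m := by
  constructor
  · intro h m hm
    have hm' := h ⟨n - 1 - m, by simp; omega⟩
    simp only [List.get_eq_getElem, getElem_rayWord] at hm'
    rw [show n - 1 - (n - 1 - m) = m by omega] at hm'
    rw [← hm']; congr 1; omega
  · rintro h ⟨k, hk⟩
    simp only [length_rayWord] at hk
    simp only [List.get_eq_getElem, getElem_rayWord, ← h _ (show n - 1 - k < n by omega)]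
    congr 1; omega

end RayWords

section ShiftSpace

variable {A : Type*} {X : Set (ℤ → A)}

lemma translate_mem (hσ : shiftMap '' X = X) (i : ℤ) {x : ℤ → A} (hx : x ∈ X) :
    (fun j => x (j + i)) ∈ X := by
  induction i using Int.induction_on with
  | zero => simpa using hx
  | succ k ih =>
    convert hσ.subset (mem_image_of_mem shiftMap ih) using 1
    funext j
    simp only [shiftMap]
    ring_nf
  | pred k ih =>
    obtain ⟨y, hy, hyx⟩ := hσ.symm.subset ih
    convert hy using 1
    funext j
    have hj := congrFun hyx (j - 1)
    simp only [shiftMap, sub_add_cancel] at hj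
    rw [hj]
    ring_nf

lemma isWordOf_of_occursAt (hσ : shiftMap '' X = X) {x : ℤ → A} (hx : x ∈ X) {u : List A}
    {i : ℤ} (h : OccursAt x u i) : IsWordOf X u :=
  ⟨_, translate_mem hσ i hx, fun k => by simpa [add_comm] using h k⟩

lemma IsWordOf.of_isSuffix (hσ : shiftMap '' X = X) {u v : List A} (hv : IsWordOf X v)
    (h : u <:+ v) : IsWordOf X u := by
  obtain ⟨t, rfl⟩ := h
  obtain ⟨x, hx, hocc⟩ := hv
  refine isWordOf_of_occursAt hσ hx (i := t.length) fun k => ?_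
  simpa [List.getElem_append_right] using hocc ⟨t.length + k, by simp⟩

lemma IsLeftRay.isWordOf_rayWord (hσ : shiftMap '' X = X) {z : ℕ → A} (hz : IsLeftRay X z)
    (n : ℕ) : IsWordOf X (rayWord z n) := by
  obtain ⟨x, hx, hxz⟩ := hz
  exact isWordOf_of_occursAt hσ hx (occursAt_rayWord_iff.mpr fun m _ => hxz m)

lemma isLeftRay_of_forall_exists_eq [Finite A] (hcl : @IsClosed _ (seqTop A) X) {z : ℕ → A}
    (h : ∀ n : ℕ, ∃ x ∈ X, ∀ m < n, x (-((m : ℤ) + 1)) = z m) : IsLeftRay X z := by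
  let _ : TopologicalSpace A := ⊥
  have _ : DiscreteTopology A := ⟨rfl⟩
  let C : ℕ → Set (ℤ → A) := fun n => X ∩ {x | ∀ m < n, x (-((m : ℤ) + 1)) = z m}
  have hC : ∀ n, IsClosed (C n) := fun n => IsClosed.inter hcl <| by
    simp only [ofPred_forall]
    exact isClosed_biInter fun m _ => isClosed_eq (continuous_apply _) continuous_const
  obtain ⟨x, hx⟩ := IsCompact.nonempty_iInter_of_sequence_nonempty_isCompact_isClosed C
    (fun n x hx => ⟨hx.1, fun m hm => hx.2 m (by omega)⟩) h (hC 0).isCompact hC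
  simp only [mem_iInter] at hx
  exact ⟨x, (hx 0).1, fun m => (hx (m + 1)).2 m m.lt_succ_self⟩

lemma isLeftRay_iff_forall_isWordOf_rayWord [Finite A] (hσ : shiftMap '' X = X)
    (hcl : @IsClosed _ (seqTop A) X) {z : ℕ → A} :
    IsLeftRay X z ↔ ∀ n : ℕ, IsWordOf X (rayWord z n) := by
  refine ⟨IsLeftRay.isWordOf_rayWord hσ,
    fun h => isLeftRay_of_forall_exists_eq hcl fun n => ?_⟩
  obtain ⟨x, hx, hocc⟩ := h n
  refine ⟨fun j => x (j + n), translate_mem hσ n hx,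
    (occursAt_rayWord_iff (x := fun j => x (j + n))).mp fun k => ?_⟩
  simpa using hocc k

lemma IsWordOf.exists_isLeftRay_rayAppend (hσ : shiftMap '' X = X) {u : List A}
    (hu : IsWordOf X u) : ∃ z, IsLeftRay X (rayAppend z u) := by
  obtain ⟨x, hx, hocc⟩ := hu
  refine ⟨fun m => x (-((m : ℤ) + 1)), _, translate_mem hσ u.length hx, fun m => ?_⟩
  by_cases hm : m < u.length
  · simp only [rayAppend, dif_pos hm, List.get_eq_getElem, List.getElem_reverse]
    have hk := hocc ⟨u.length - 1 - m, by omega⟩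
    simp only [List.get_eq_getElem] at hk
    rw [← hk]
    congr 1; omega
  · simp only [rayAppend, dif_neg hm]
    congr 1; omega

end ShiftSpace

section TransitionSets

variable {A : Type*}

def IsTransitionSet (X : Set (ℤ → A)) (W : Set (List A)) : Prop :=
  ∀ u v : List A, IsWordOf X u → IsWordOf X v → ∃ w ∈ W, IsWordOf X (u ++ w ++ v)

def IsRayTransitionSet (X : Set (ℤ → A)) (W : Set (List A)) : Prop :=
  ∀ z : ℕ → A, IsLeftRay X z → ∀ u : List A, IsWordOf X u →
    ∃ w ∈ W, IsLeftRay X (rayAppend (rayAppend z w) u)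

variable {X : Set (ℤ → A)} {W : Set (List A)}

lemma IsRayTransitionSet.isTransitionSet (hσ : shiftMap '' X = X)
    (hW : IsRayTransitionSet X W) : IsTransitionSet X W := by
  intro u v hu hv
  obtain ⟨z, hz⟩ := hu.exists_isLeftRay_rayAppend hσ
  obtain ⟨w, hwW, hray⟩ := hW _ hz v hv
  refine ⟨w, hwW, ?_⟩
  have hword := hray.isWordOf_rayWord hσ (0 + u.length + w.length + v.length)
  rwa [rayWord_rayAppend, rayWord_rayAppend, rayWord_rayAppend, rayWord_zero,
    List.nil_append] at hword

lemma IsTransitionSet.isRayTransitionSet [Finite A] (hσ : shiftMap '' X = X)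
    (hcl : @IsClosed _ (seqTop A) X) (hWfin : W.Finite) (hW : IsTransitionSet X W) :
    IsRayTransitionSet X W := by
  intro z hz u hu
  have hsuffix : ∀ n, ∃ w ∈ W, IsWordOf X (rayWord z n ++ w ++ u) :=
    fun n => hW _ u (hz.isWordOf_rayWord hσ n) hu
  obtain ⟨w, hwW, hfreq⟩ :=
    hWfin.frequently_exists.mp (Frequently.of_forall (f := atTop) hsuffix)
  refine ⟨w, hwW, (isLeftRay_iff_forall_isWordOf_rayWord hσ hcl).mpr fun m => ?_⟩
  obtain ⟨n, hmn, hn⟩ := frequently_atTop.mp hfreq m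
  rw [← rayWord_rayAppend, ← rayWord_rayAppend] at hn
  exact hn.of_isSuffix hσ (rayWord_isSuffix _ (by omega))

lemma isRayTransitionSet_iff_isTransitionSet [Finite A] (hσ : shiftMap '' X = X)
    (hcl : @IsClosed _ (seqTop A) X) (hWfin : W.Finite) :
    IsRayTransitionSet X W ↔ IsTransitionSet X W :=
  ⟨IsRayTransitionSet.isTransitionSet hσ, IsTransitionSet.isRayTransitionSet hσ hcl hWfin⟩

end TransitionSets

/-- Characterization of the (almost) specification property
in terms of left rays. -/
theorem specification_and_almostSpecified_via_leftRays
    {A : Type*} [Fintype A] (X : Set (ℤ → A)) (hX : IsShiftSpace X) :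
    (HasSpecification X ↔
      ∃ N : ℕ, ∀ z : ℕ → A, IsLeftRay X z → ∀ u : List A, IsWordOf X u →
        ∃ w : List A, w.length = N ∧ IsLeftRay X (rayAppend (rayAppend z w) u)) ∧
    (AlmostSpecified X ↔
      ∃ N : ℕ, ∀ z : ℕ → A, IsLeftRay X z → ∀ u : List A, IsWordOf X u →
        ∃ w : List A, w.length ≤ N ∧ IsLeftRay X (rayAppend (rayAppend z w) u)) := by
  obtain ⟨-, hcl, hσ⟩ := hX
  exact ⟨exists_congr fun N =>
      (isRayTransitionSet_iff_isTransitionSet hσ hcl (List.finite_length_eq A N)).symm,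
    exists_congr fun N =>
      (isRayTransitionSet_iff_isTransitionSet hσ hcl (List.finite_length_le A N)).symm⟩
end

section
/- Let X be an almost specified shift space and let D_0, …, D_{p−1} be a cyclic cover of X. Then for each i, the system (D_i, σ^p) has the specification property: there exists N ∈ ℕ such that whenever u is a word of length pk and v is a word of length pl, each occurring at coordinate 0 in some point of D_i (i.e. there is x ∈ D_i with x_{[0,pk)} = u, and similarly for v), there exists a word w of length pN such that the concatenation uwv occurs at coordinate 0 in some point of D_i. -/
open Set Filter

/-!
Since the pairwise intersections `D a ∩ D b` are closed with empty interior in `X`, some point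
lies in a single piece, and a long window `C` of a suitable shift of it is a phase marker: a
point of a piece `D j` that starts with `C` must have `j = i`. Using mixing of `σ^p` on `D i`,
put `C` in front of `u` and behind `v`, then glue with almost specification: the two markers
force the gap to be a multiple of `p`, so words of `D i` can be glued with a gap `p m`,
`m ≤ N₀`. The set of admissible `m` can only shrink when the words are extended, so some pair
`a, b` has such a set that no extension shrinks, with an element `m₀` common to all
extensions. Gluing `u ⋯ a ⋯ b y a ⋯ b ⋯ v` and letting the mixing word `y` absorb the two
variable gaps gives a gap of fixed length.
-/

section Words

variable {A : Type*}

def window (x : ℤ → A) (q : ℤ) (n : ℕ) : List A :=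
  List.ofFn fun k : Fin n => x (q + k)

@[simp] lemma length_window (x : ℤ → A) (q : ℤ) (n : ℕ) : (window x q n).length = n :=
  List.length_ofFn

lemma occursAt_iff_getElem {x : ℤ → A} {u : List A} {q : ℤ} :
    OccursAt x u q ↔ ∀ (k : ℕ) (hk : k < u.length), x (q + k) = u[k] :=
  ⟨fun h k hk => h ⟨k, hk⟩, fun h k => h k k.isLt⟩

lemma occursAt_append {x : ℤ → A} {u v : List A} {q : ℤ} :
    OccursAt x (u ++ v) q ↔ OccursAt x u q ∧ OccursAt x v (q + u.length) := by
  simp only [occursAt_iff_getElem, List.length_append]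
  constructor
  · intro h
    refine ⟨fun k hk => ?_, fun k hk => ?_⟩
    · simpa [List.getElem_append_left hk] using h k (by omega)
    · simpa [add_assoc] using h (u.length + k) (by omega)
  · rintro ⟨hu, hv⟩ k hk
    rcases lt_or_ge k u.length with hlt | hge
    · simpa [List.getElem_append_left hlt] using hu k hlt
    · rw [List.getElem_append_right hge]
      convert hv (k - u.length) (by omega) using 2
      push_cast [hge]
      ring

lemma occursAt_window_iff {x y : ℤ → A} {q q' : ℤ} {n : ℕ} :
    OccursAt y (window x q n) q' ↔ ∀ k < n, y (q' + k) = x (q + k) := by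
  simp [occursAt_iff_getElem, window]

lemma occursAt_window_self (x : ℤ → A) (q : ℤ) (n : ℕ) : OccursAt x (window x q n) q :=
  occursAt_window_iff.2 fun _ _ => rfl

lemma iterate_shiftMap_apply (n : ℕ) (x : ℤ → A) (m : ℤ) : shiftMap^[n] x m = x (m + n) := by
  induction n generalizing m with
  | zero => simp
  | succ n ih =>
    rw [Function.iterate_succ_apply', shiftMap, ih]
    push_cast
    ring_nf

lemma occursAt_iterate_shiftMap {x : ℤ → A} {u : List A} {q : ℤ} {n : ℕ} :
    OccursAt (shiftMap^[n] x) u q ↔ OccursAt x u (q + n) := by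
  simp only [OccursAt, iterate_shiftMap_apply, add_right_comm]

lemma IsWordOf.left_of_append {Y : Set (ℤ → A)} {u v : List A} (h : IsWordOf Y (u ++ v)) :
    IsWordOf Y u :=
  let ⟨x, hx, hxuv⟩ := h
  ⟨x, hx, (occursAt_append.1 hxuv).1⟩

lemma IsWordOf.mono {Y Z : Set (ℤ → A)} (hYZ : Y ⊆ Z) {u : List A}
    (h : IsWordOf Y u) : IsWordOf Z u :=
  let ⟨x, hx, hxu⟩ := h
  ⟨x, hYZ hx, hxu⟩

end Words

section CyclicPieces

variable {A : Type*} {p : ℕ} {D : ZMod p → Set (ℤ → A)}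

lemma image_iterate_shiftMap (hshift : ∀ j, shiftMap '' D j = D (j + 1)) (j : ZMod p) (n : ℕ) :
    shiftMap^[n] '' D j = D (j + n) := by
  induction n with
  | zero => simp
  | succ n ih => rw [Function.iterate_succ', Set.image_comp, ih, hshift, Nat.cast_succ, add_assoc]

lemma iterate_shiftMap_mem (hshift : ∀ j, shiftMap '' D j = D (j + 1)) {j : ZMod p}
    {x : ℤ → A} (hx : x ∈ D j) (n : ℕ) : shiftMap^[n] x ∈ D (j + n) :=
  image_iterate_shiftMap hshift j n ▸ mem_image_of_mem _ hx

lemma iterate_shiftMap_mem_of_dvd (hshift : ∀ j, shiftMap '' D j = D (j + 1)) {j : ZMod p}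
    {x : ℤ → A} (hx : x ∈ D j) {n : ℕ} (hn : p ∣ n) : shiftMap^[n] x ∈ D j := by
  simpa [(ZMod.natCast_eq_zero_iff n p).2 hn] using iterate_shiftMap_mem hshift hx n

lemma IsWordOf.right_of_append (hshift : ∀ j, shiftMap '' D j = D (j + 1)) {j : ZMod p}
    {u v : List A} (h : IsWordOf (D j) (u ++ v)) (hu : p ∣ u.length) : IsWordOf (D j) v :=
  let ⟨x, hx, hxuv⟩ := h
  ⟨_, iterate_shiftMap_mem_of_dvd hshift hx hu,
    occursAt_iterate_shiftMap.2 (by simpa using (occursAt_append.1 hxuv).2)⟩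

def IsPhaseMarker (D : ZMod p → Set (ℤ → A)) (i : ZMod p) (C : List A) : Prop :=
  ∀ j, ∀ y ∈ D j, OccursAt y C 0 → j = i

lemma IsPhaseMarker.add_eq (hshift : ∀ j, shiftMap '' D j = D (j + 1)) {i j : ZMod p}
    {C : List A} (hC : IsPhaseMarker D i C) {y : ℤ → A} (hy : y ∈ D j) {q : ℕ}
    (hq : OccursAt y C q) : j + q = i :=
  hC _ _ (iterate_shiftMap_mem hshift hy q) (occursAt_iterate_shiftMap.2 (by simpa using hq))

end CyclicPieces

lemma inter_eq_empty_of_subset_biUnion {α ι : Type*} [TopologicalSpace α] {X : Set α}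
    {E : ι → Set α} (s : Finset ι) (hEc : ∀ q ∈ s, IsClosed (E q))
    (hE : ∀ q ∈ s, ∀ U, IsOpen U → X ∩ U ⊆ E q → X ∩ U = ∅) {U : Set α} (hU : IsOpen U)
    (hXU : X ∩ U ⊆ ⋃ q ∈ s, E q) : X ∩ U = ∅ := by
  classical
  induction s using Finset.induction_on generalizing U with
  | empty => simpa using hXU
  | insert q s _ ih =>
    simp only [Finset.mem_insert, forall_eq_or_imp] at hEc hE
    have hoff : X ∩ (U ∩ (E q)ᶜ) = ∅ := by
      refine ih hEc.2 hE.2 (hU.inter hEc.1.isOpen_compl) fun x ⟨hxX, hxU, (hxq : x ∉ E q)⟩ => ?_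
      simpa [hxq] using hXU ⟨hxX, hxU⟩
    refine hE.1 U hU fun x hx => by_contra fun hxq => ?_
    exact (eq_empty_iff_forall_notMem.1 hoff) x ⟨hx.1, hx.2, hxq⟩

section Topology

variable {A : Type*} [TopologicalSpace A]

lemma exists_forall_abs_le_mem_of_isOpen {U : Set (ℤ → A)} (hU : IsOpen U) {g : ℤ → A}
    (hg : g ∈ U) : ∃ n : ℕ, ∀ x : ℤ → A, (∀ m : ℤ, |m| ≤ n → x m = g m) → x ∈ U := by
  obtain ⟨I, u, hu, hsub⟩ := isOpen_pi_iff.mp hU g hg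
  refine ⟨I.sup Int.natAbs, fun x hx => hsub fun m hm => ?_⟩
  rw [hx m (by rw [Int.abs_eq_natAbs]; exact_mod_cast Finset.le_sup hm)]
  exact (hu m hm).2

lemma isOpen_setOf_occursAt [DiscreteTopology A] (u : List A) (q : ℤ) :
    IsOpen {x : ℤ → A | OccursAt x u q} := by
  simp only [OccursAt, ofPred_forall]
  exact isOpen_iInter_of_finite fun k =>
    (continuous_apply (A := fun _ : ℤ => A) (q + (k : ℕ))).isOpen_preimage {u.get k}
      (isOpen_discrete _)

lemma exists_gap_of_mixing [DiscreteTopology A] {p : ℕ} {Y : Set (ℤ → A)}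
    (hmix : ∀ U V : Set (ℤ → A), IsOpen U → IsOpen V → (Y ∩ U).Nonempty → (Y ∩ V).Nonempty →
      ∃ N : ℕ, ∀ n : ℕ, N ≤ n → ((shiftMap^[p * n] '' (Y ∩ U)) ∩ (Y ∩ V)).Nonempty)
    {u v : List A} (hu : IsWordOf Y u) (hv : IsWordOf Y v) (hup : p ∣ u.length) :
    ∃ M, ∀ n ≥ M, ∃ w : List A, w.length = p * n ∧ IsWordOf Y (u ++ w ++ v) := by
  obtain ⟨a, ha⟩ := hup
  obtain ⟨M, hM⟩ := hmix _ _ (isOpen_setOf_occursAt u 0) (isOpen_setOf_occursAt v 0) hu hv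
  refine ⟨M, fun n hn => ?_⟩
  obtain ⟨_, ⟨x, ⟨hxY, hxu⟩, rfl⟩, -, hxv⟩ := hM (a + n) (by omega)
  refine ⟨window x u.length (p * n), length_window .., x, hxY, ?_⟩
  refine occursAt_append.2 ⟨occursAt_append.2 ⟨hxu, ?_⟩, ?_⟩
  · rw [zero_add]
    exact occursAt_window_self x _ _
  · convert occursAt_iterate_shiftMap.1 hxv using 2
    simp [ha]
    ring

variable {X : Set (ℤ → A)} {p : ℕ} [NeZero p] {D : ZMod p → Set (ℤ → A)}

lemma exists_mem_unique_piece (hX : X.Nonempty) (hDcl : ∀ j, IsClosed (D j))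
    (hcover : X ⊆ ⋃ j, D j)
    (hint : ∀ a b, a ≠ b → ∀ U, IsOpen U → X ∩ U ⊆ D a ∩ D b → X ∩ U = ∅) :
    ∃ j, ∃ g ∈ D j, ∀ k, g ∈ D k → k = j := by
  by_contra! h
  have hX' : X ∩ univ ⊆ ⋃ q ∈ (Finset.univ : Finset (ZMod p)).offDiag, D q.1 ∩ D q.2 := by
    intro x ⟨hx, _⟩
    obtain ⟨j, hj⟩ := mem_iUnion.1 (hcover hx)
    obtain ⟨k, hk, hkj⟩ := h j x hj
    exact mem_biUnion (x := (k, j)) (by simpa using hkj) ⟨hk, hj⟩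
  have := inter_eq_empty_of_subset_biUnion _ (fun q _ => (hDcl q.1).inter (hDcl q.2))
    (fun q hq => hint q.1 q.2 (Finset.mem_offDiag.1 hq).2.2) isOpen_univ hX'
  exact hX.ne_empty (by simpa using this)

lemma exists_phaseMarker (hX : X.Nonempty) (hDcl : ∀ j, IsClosed (D j))
    (hcover : X ⊆ ⋃ j, D j) (hshift : ∀ j, shiftMap '' D j = D (j + 1))
    (hint : ∀ a b, a ≠ b → ∀ U, IsOpen U → X ∩ U ⊆ D a ∩ D b → X ∩ U = ∅) (i : ZMod p) :
    ∃ C : List A, IsWordOf (D i) C ∧ p ∣ C.length ∧ IsPhaseMarker D i C := by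
  obtain ⟨j₀, g, hg, hg_unique⟩ := exists_mem_unique_piece hX hDcl hcover hint
  have hopen : IsOpen (⋂ k ∈ {k | k ≠ j₀}, (D k)ᶜ) :=
    (toFinite _).isOpen_biInter fun k _ => (hDcl k).isOpen_compl
  obtain ⟨n, hn⟩ := exists_forall_abs_le_mem_of_isOpen hopen
    (mem_iInter₂.2 fun k hk hgk => hk (hg_unique k hgk))
  -- `n ≤ T` moves the window `[-n, n]` of `g` into `[0, ∞)`, and `i + T = j₀`
  set T := n + (j₀ - i - n).val
  have hT : i + (T : ZMod p) = j₀ := by simp [T]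
  rw [← hT, ← image_iterate_shiftMap hshift] at hg
  obtain ⟨g₀, hg₀, rfl⟩ := hg
  refine ⟨window g₀ 0 (p * (T + n + 1)), ⟨g₀, hg₀, occursAt_window_self g₀ 0 _⟩, by simp,
    fun k y hy hyC => ?_⟩
  have hyT : shiftMap^[T] y ∈ ⋂ k ∈ {k | k ≠ j₀}, (D k)ᶜ := by
    refine hn _ fun m hm => ?_
    rw [iterate_shiftMap_apply, iterate_shiftMap_apply]
    obtain ⟨hm₁, hm₂⟩ := abs_le.1 hm
    have hnT : n ≤ T := Nat.le_add_right _ _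
    have hlen : T + n + 1 ≤ p * (T + n + 1) := Nat.le_mul_of_pos_left _ (NeZero.pos p)
    have hmT : 0 ≤ m + T := by omega
    simpa [Int.toNat_of_nonneg hmT] using occursAt_window_iff.1 hyC (m + T).toNat (by omega)
  have hkT : k + T = j₀ := by_contra fun h => mem_iInter₂.1 hyT (k + T) h
    (iterate_shiftMap_mem hshift hy T)
  exact add_right_cancel (hkT.trans hT.symm)

end Topology

lemma exists_bounded_gap {A : Type*} {p : ℕ} [NeZero p] {D : ZMod p → Set (ℤ → A)}
    {X : Set (ℤ → A)} {N₀ : ℕ} {i : ZMod p} {C : List A}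
    (hshift : ∀ j, shiftMap '' D j = D (j + 1)) (hcover : X ⊆ ⋃ j, D j) (hDX : D i ⊆ X)
    (hAS : ∀ u v : List A, IsWordOf X u → IsWordOf X v →
      ∃ w : List A, w.length ≤ N₀ ∧ IsWordOf X (u ++ w ++ v))
    (hmix : ∀ u v : List A, IsWordOf (D i) u → IsWordOf (D i) v → p ∣ u.length →
      ∃ M, ∀ n ≥ M, ∃ w : List A, w.length = p * n ∧ IsWordOf (D i) (u ++ w ++ v))
    (hC : IsWordOf (D i) C) (hCp : p ∣ C.length) (hCm : IsPhaseMarker D i C)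
    {u v : List A} (hu : IsWordOf (D i) u) (hv : IsWordOf (D i) v)
    (hup : p ∣ u.length) (hvp : p ∣ v.length) :
    ∃ m ≤ N₀, ∃ w : List A, w.length = p * m ∧ IsWordOf (D i) (u ++ w ++ v) := by
  obtain ⟨M₁, hM₁⟩ := hmix C u hC hu hCp
  obtain ⟨y₁, hy₁, h₁⟩ := hM₁ M₁ le_rfl
  obtain ⟨M₂, hM₂⟩ := hmix v C hv hC hvp
  obtain ⟨y₂, hy₂, h₂⟩ := hM₂ M₂ le_rfl
  obtain ⟨w, hwN, y, hyX, hy⟩ := hAS _ _ (h₁.mono hDX) (h₂.mono hDX)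
  obtain ⟨k, hk⟩ := mem_iUnion.1 (hcover hyX)
  -- `C` occurs in `y` both at `0` and at `P.length`, so `p` divides `P.length`
  set P := C ++ y₁ ++ u ++ w ++ v ++ y₂
  have hyP := occursAt_append.1 (by simpa [P] using hy : OccursAt y (P ++ C) 0)
  have hki : k = i := hCm k y hk (occursAt_append.1 (by simpa using hy : OccursAt y (C ++ _) 0)).1
  have hPi : k + P.length = i := hCm.add_eq hshift hk (by simpa using hyP.2)
  have hP : p ∣ P.length := by
    rwa [hki, add_eq_left, ZMod.natCast_eq_zero_iff] at hPi
  obtain ⟨c, hc⟩ := hCp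
  obtain ⟨a, ha⟩ := hup
  obtain ⟨b, hb⟩ := hvp
  have hPlen : P.length = p * (c + M₁ + a + b + M₂) + w.length := by
    simp only [P, List.length_append, hc, hy₁, ha, hb, hy₂]
    ring
  obtain ⟨m, hm⟩ := (Nat.dvd_add_right (dvd_mul_right _ _)).1 (hPlen ▸ hP)
  refine ⟨m, (Nat.le_mul_of_pos_left m (NeZero.pos p)).trans (hm ▸ hwN), w, hm,
    shiftMap^[(C ++ y₁).length] y,
    iterate_shiftMap_mem_of_dvd hshift (hki ▸ hk) (by simp [hc, hy₁, ← mul_add]), ?_⟩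
  have := occursAt_append.1 (occursAt_append.1
    (by simpa using hy : OccursAt y ((C ++ y₁) ++ (u ++ w ++ v) ++ (y₂ ++ C)) 0)).1
  exact occursAt_iterate_shiftMap.2 (by simpa using this.2)

section GapLanguage

variable {A : Type*} {L : Set (List A)} {p N : ℕ}

open Classical in
noncomputable def gapSet (L : Set (List A)) (p N : ℕ) (a b : List A) : Finset ℕ :=
  (Finset.range (N + 1)).filter fun m => ∃ w : List A, w.length = p * m ∧ a ++ w ++ b ∈ L

lemma mem_gapSet {a b : List A} {m : ℕ} :
    m ∈ gapSet L p N a b ↔ m ≤ N ∧ ∃ w : List A, w.length = p * m ∧ a ++ w ++ b ∈ L := by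
  simp [gapSet]

lemma gapSet_append_subset (hpre : ∀ u v, u ++ v ∈ L → u ∈ L)
    (hsuf : ∀ u v, u ++ v ∈ L → p ∣ u.length → v ∈ L) {s a b t : List A}
    (hs : p ∣ s.length) : gapSet L p N (s ++ a) (b ++ t) ⊆ gapSet L p N a b := by
  intro m hm
  obtain ⟨hmN, w, hw, hL⟩ := mem_gapSet.1 hm
  exact mem_gapSet.2 ⟨hmN, w, hw, hsuf s _ (hpre _ t (by simpa using hL)) hs⟩

lemma exists_stable_gap (hpre : ∀ u v, u ++ v ∈ L → u ∈ L)
    (hsuf : ∀ u v, u ++ v ∈ L → p ∣ u.length → v ∈ L)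
    (hglue : ∀ u v, u ∈ L → v ∈ L → p ∣ u.length → p ∣ v.length →
      ∃ m ≤ N, ∃ w : List A, w.length = p * m ∧ u ++ w ++ v ∈ L)
    (hL : [] ∈ L) :
    ∃ a b m, a ∈ L ∧ b ∈ L ∧ p ∣ a.length ∧ p ∣ b.length ∧
      ∀ s t, s ++ a ∈ L → b ++ t ∈ L → p ∣ s.length → p ∣ t.length →
        ∃ w : List A, w.length = p * m ∧ s ++ a ++ w ++ b ++ t ∈ L := by
  classical
  -- a pair whose set of admissible gaps is smallest; extending it can only shrink that set
  have hex : ∃ k, ∃ a b, a ∈ L ∧ b ∈ L ∧ p ∣ a.length ∧ p ∣ b.length ∧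
      (gapSet L p N a b).card = k := ⟨_, [], [], hL, hL, by simp, by simp, rfl⟩
  obtain ⟨a, b, ha, hb, hap, hbp, hcard⟩ := Nat.find_spec hex
  obtain ⟨m, hmN, w, hw, hawb⟩ := hglue a b ha hb hap hbp
  refine ⟨a, b, m, ha, hb, hap, hbp, fun s t hsa hbt hs ht => ?_⟩
  have heq : gapSet L p N (s ++ a) (b ++ t) = gapSet L p N a b :=
    Finset.eq_of_subset_of_card_le (gapSet_append_subset hpre hsuf hs)
      (hcard ▸ Nat.find_min' hex ⟨s ++ a, b ++ t, hsa, hbt, by simpa using dvd_add hs hap,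
        by simpa using dvd_add hbp ht, rfl⟩)
  obtain ⟨-, w, hw, h⟩ := mem_gapSet.1 (heq ▸ mem_gapSet.2 ⟨hmN, w, hw, hawb⟩)
  exact ⟨w, hw, by simpa using h⟩

theorem exists_fixed_gap (hpre : ∀ u v, u ++ v ∈ L → u ∈ L)
    (hsuf : ∀ u v, u ++ v ∈ L → p ∣ u.length → v ∈ L)
    (hglue : ∀ u v, u ∈ L → v ∈ L → p ∣ u.length → p ∣ v.length →
      ∃ m ≤ N, ∃ w : List A, w.length = p * m ∧ u ++ w ++ v ∈ L)
    (hmix : ∀ u v, u ∈ L → v ∈ L → p ∣ u.length →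
      ∃ M, ∀ n ≥ M, ∃ w : List A, w.length = p * n ∧ u ++ w ++ v ∈ L)
    (hL : [] ∈ L) :
    ∃ K, ∀ u v, u ∈ L → v ∈ L → p ∣ u.length → p ∣ v.length →
      ∃ w : List A, w.length = p * K ∧ u ++ w ++ v ∈ L := by
  obtain ⟨a, b, m₀, ha, hb, ⟨α, hα⟩, ⟨β, hβ⟩, hstable⟩ := exists_stable_gap hpre hsuf hglue hL
  obtain ⟨M, hM⟩ := hmix b a hb ha ⟨β, hβ⟩
  refine ⟨M + 2 * N + 2 * m₀ + 2 * α + 2 * β, fun u v hu hv ⟨μ, hμ⟩ ⟨ν, hν⟩ => ?_⟩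
  obtain ⟨m₁, hm₁, w₁, hw₁, h₁⟩ := hglue u a hu ha ⟨μ, hμ⟩ ⟨α, hα⟩
  obtain ⟨m₂, hm₂, w₂, hw₂, h₂⟩ := hglue b v hb hv ⟨β, hβ⟩ ⟨ν, hν⟩
  obtain ⟨n, hn⟩ : ∃ n, m₁ + m₂ + n = M + 2 * N := ⟨M + 2 * N - m₁ - m₂, by omega⟩
  obtain ⟨y, hy, hbya⟩ := hM n (by omega)
  obtain ⟨w, hw, h₃⟩ := hstable (u ++ w₁) (y ++ a) (by simpa using h₁) (by simpa using hbya)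
    ⟨μ + m₁, by simp [hμ, hw₁, mul_add]⟩ ⟨n + α, by simp [hy, hα, mul_add]⟩
  obtain ⟨w', hw', h₄⟩ := hstable (u ++ w₁ ++ a ++ w ++ b ++ y) (w₂ ++ v) (by simpa using h₃)
    (by simpa using h₂) ⟨μ + m₁ + α + m₀ + β + n, by simp [hμ, hw₁, hα, hw, hβ, hy]; ring⟩
    ⟨m₂ + ν, by simp [hw₂, hν, mul_add]⟩
  refine ⟨w₁ ++ a ++ w ++ b ++ y ++ a ++ w' ++ b ++ w₂, ?_, by simpa using h₄⟩
  simp only [List.length_append, hw₁, hα, hw, hβ, hy, hw', hw₂, ← hn]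
  ring

end GapLanguage

theorem cyclicCover_has_specification_general
    {A : Type*} (X : Set (ℤ → A))
    (hX : IsShiftSpace X) (hAS : AlmostSpecified X)
    (p : ℕ) (D : ZMod p → Set (ℤ → A)) (hD : IsCyclicCover X p D) (i : ZMod p) :
    ∃ N : ℕ, ∀ (k l : ℕ) (u v : List A), u.length = p * k → v.length = p * l →
      (∃ x ∈ D i, OccursAt x u 0) → (∃ x ∈ D i, OccursAt x v 0) →
      ∃ w : List A, w.length = p * N ∧ ∃ x ∈ D i, OccursAt x (u ++ w ++ v) 0 := by
  let _ : TopologicalSpace A := ⊥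
  have : DiscreteTopology A := ⟨rfl⟩
  obtain ⟨hp, hDcl, hcover, hshift, hmix, hint⟩ := hD
  have : NeZero p := ⟨hp.ne'⟩
  obtain ⟨N₀, hN₀⟩ := hAS
  obtain ⟨C, hC, hCp, hCm⟩ :=
    exists_phaseMarker hX.1 (fun j => (hDcl j).1) hcover.ge hshift hint i
  have hmixW : ∀ u v, IsWordOf (D i) u → IsWordOf (D i) v → p ∣ u.length →
      ∃ M, ∀ n ≥ M, ∃ w : List A, w.length = p * n ∧ IsWordOf (D i) (u ++ w ++ v) :=
    fun _ _ => exists_gap_of_mixing (hmix i)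
  obtain ⟨K, hK⟩ := exists_fixed_gap (L := {u | IsWordOf (D i) u})
    (fun _ _ => IsWordOf.left_of_append) (fun _ _ => IsWordOf.right_of_append hshift)
    (fun _ _ => exists_bounded_gap hshift hcover.ge (hDcl i).2 hN₀ hmixW hC hCp hCm) hmixW
    (IsWordOf.left_of_append (v := C) hC)
  exact ⟨K, fun k l u v hu hv hu' hv' => hK u v hu' hv' ⟨k, hu⟩ ⟨l, hv⟩⟩

/-- If `X` is almost specified with cyclic cover
`D_0, …, D_{p-1}`, then each `(D_i, σ^p)` has the specification property. -/
theorem cyclicCover_has_specification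
    {A : Type*} [Fintype A] (X : Set (ℤ → A))
    (hX : IsShiftSpace X) (hAS : AlmostSpecified X)
    (p : ℕ) (D : ZMod p → Set (ℤ → A)) (hD : IsCyclicCover X p D) (i : ZMod p) :
    ∃ N : ℕ, ∀ (k l : ℕ) (u v : List A), u.length = p * k → v.length = p * l →
      (∃ x ∈ D i, OccursAt x u 0) → (∃ x ∈ D i, OccursAt x v 0) →
      ∃ w : List A, w.length = p * N ∧ ∃ x ∈ D i, OccursAt x (u ++ w ++ v) 0 :=
  cyclicCover_has_specification_general X hX hAS p D hD i
end
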